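/- Let Γ ⊆ Γ' be closed subspaces of a complex Hilbert space Ĥ, β = Γ' ∩ Γ^⊥, and let M be a closed subspace of Ĥ transversal to (Γ,Γ'). Let L ⊆ β be a closed subspace such that (L, γ_!M) is a Fredholm pair of subspaces of β. Then (γ^{-1}(L), M) = (L + Γ, M) is a Fredholm pair of subspaces of Ĥ with dim((L + Γ) ∩ M) = dim(L ∩ γ_!M) and dim(Ĥ/((L + Γ) + M)) = dim(β/(L + γ_!M)), and hence ind_Ĥ(L + Γ, M) = ind_β(L, γ_!M) ∈ ℤ. -/

import Mathlib

noncomputable section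

open Classical in
/-- Orthogonal projection onto a closed (complete) submodule, as a continuous linear map
on the ambient space (defined to be `0` on non-complete submodules). -/
noncomputable def orthProj {W : Type*} [NormedAddCommGroup W] [InnerProductSpace ℂ W]
    (M : Submodule ℂ W) : W →L[ℂ] W :=
  if h : IsComplete (M : Set W) then
    haveI : CompleteSpace M := h.completeSpace_coe
    M.subtypeL.comp M.orthogonalProjectionOnto
  else 0

/-- `(M, N)` is a Fredholm pair of subspaces of `W`: the sum is closed, the intersection
is finite-dimensional and the sum has finite codimension. -/
def FredholmPair {W : Type*} [NormedAddCommGroup W] [InnerProductSpace ℂ W]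
    (M N : Submodule ℂ W) : Prop :=
  IsClosed ((M ⊔ N : Submodule ℂ W) : Set W) ∧
  FiniteDimensional ℂ ↥(M ⊓ N) ∧
  FiniteDimensional ℂ (W ⧸ (M ⊔ N))

/-- `(M, N)` is a transversal pair of subspaces of `W`. -/
def TransversalPair {W : Type*} [NormedAddCommGroup W] [InnerProductSpace ℂ W]
    (M N : Submodule ℂ W) : Prop :=
  M ⊓ N = ⊥ ∧ M ⊔ N = ⊤

/-- `(L, N)` is a Fredholm pair of subspaces of the subspace `β` of `W` (the codimension
is computed inside `β`). -/
def FredholmPairIn {W : Type*} [NormedAddCommGroup W] [InnerProductSpace ℂ W]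
    (β L N : Submodule ℂ W) : Prop :=
  IsClosed ((L ⊔ N : Submodule ℂ W) : Set W) ∧
  FiniteDimensional ℂ ↥(L ⊓ N) ∧
  FiniteDimensional ℂ (↥β ⧸ Submodule.comap β.subtype (L ⊔ N))

/-- `(L, N)` is a transversal pair of subspaces of the subspace `β` of `W`. -/
def TransversalPairIn {W : Type*} [NormedAddCommGroup W] [InnerProductSpace ℂ W]
    (β L N : Submodule ℂ W) : Prop :=
  L ⊓ N = ⊥ ∧ L ⊔ N = β

/-- The push-forward `γ_!M = γ(M ∩ Γ')`, where `β = Γ' ∩ Γ^⊥` and `γ` is the restriction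
to `Γ'` of the orthogonal projection onto `β`. -/
def gammaPush {W : Type*} [NormedAddCommGroup W] [InnerProductSpace ℂ W]
    (Γ Γ' M : Submodule ℂ W) : Submodule ℂ W :=
  (M ⊓ Γ').map (orthProj (Γ' ⊓ Γᗮ) : W →ₗ[ℂ] W)

/-- `M` is Fredholm with respect to `(Γ, Γ')`: the pair `(M, Γ)` is lower semi-Fredholm
and the pair `(M, Γ')` is upper semi-Fredholm. -/
def FredholmWrt {W : Type*} [NormedAddCommGroup W] [InnerProductSpace ℂ W]
    (Γ Γ' M : Submodule ℂ W) : Prop :=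
  (IsClosed ((M ⊔ Γ : Submodule ℂ W) : Set W) ∧ FiniteDimensional ℂ ↥(M ⊓ Γ)) ∧
  (IsClosed ((M ⊔ Γ' : Submodule ℂ W) : Set W) ∧ FiniteDimensional ℂ (W ⧸ (M ⊔ Γ')))

/-- `M` is transversal to `(Γ, Γ')`: `M + Γ` is closed, `M ∩ Γ = 0` and `M + Γ' = W`. -/
def TransversalWrt {W : Type*} [NormedAddCommGroup W] [InnerProductSpace ℂ W]
    (Γ Γ' M : Submodule ℂ W) : Prop :=
  IsClosed ((M ⊔ Γ : Submodule ℂ W) : Set W) ∧ M ⊓ Γ = ⊥ ∧ M ⊔ Γ' = ⊤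


section AuxOrthProj

variable {W : Type*} [NormedAddCommGroup W] [InnerProductSpace ℂ W] [CompleteSpace W]

lemma orthProj_spec (β : Submodule ℂ W) (hβ : IsClosed (β : Set W)) (x : W) :
    orthProj β x ∈ β ∧ x - orthProj β x ∈ βᗮ := by
  haveI : CompleteSpace β := hβ.completeSpace_coe
  rw [orthProj, dif_pos hβ.isComplete]
  exact ⟨(β.orthogonalProjectionOnto x).2, β.sub_starProjection_mem_orthogonal x⟩

lemma orthProj_eq (β : Submodule ℂ W) (hβ : IsClosed (β : Set W)) {x y : W}
    (hy : y ∈ β) (hxy : x - y ∈ βᗮ) : orthProj β x = y := by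
  obtain ⟨h1, h2⟩ := orthProj_spec β hβ x
  have h3 : orthProj β x - y ∈ β := sub_mem h1 hy
  have h4 : orthProj β x - y ∈ βᗮ := by
    have h5 := sub_mem hxy h2
    have h6 : x - y - (x - orthProj β x) = orthProj β x - y := by abel
    rwa [h6] at h5
  exact sub_eq_zero.mp ((Submodule.disjoint_def.mp β.orthogonal_disjoint) _ h3 h4)

end AuxOrthProj

open Module in
/-- with `β = Γ' ∩ Γ^⊥`, if `M` is transversal to `(Γ, Γ')` and `L ⊆ β` is
closed with `(L, γ_!M)` a Fredholm pair in `β`, then `(L + Γ, M)` is a Fredholm pair in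
`Ĥ`, with `dim((L + Γ) ∩ M) = dim(L ∩ γ_!M)` and
`dim(Ĥ/((L + Γ) + M)) = dim(β/(L + γ_!M))`; hence the indices agree in `ℤ`. -/
theorem statement_16
    {W : Type*} [NormedAddCommGroup W] [InnerProductSpace ℂ W] [CompleteSpace W]
    (Γ Γ' M L : Submodule ℂ W)
    (hΓ : IsClosed ((Γ : Submodule ℂ W) : Set W))
    (hΓ' : IsClosed ((Γ' : Submodule ℂ W) : Set W))
    (hle : Γ ≤ Γ')
    (hM : IsClosed ((M : Submodule ℂ W) : Set W))
    (hMT : TransversalWrt Γ Γ' M)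
    (hL : IsClosed ((L : Submodule ℂ W) : Set W)) (hLβ : L ≤ Γ' ⊓ Γᗮ)
    (hLF : FredholmPairIn (Γ' ⊓ Γᗮ) L (gammaPush Γ Γ' M)) :
    FredholmPair (L ⊔ Γ) M ∧
    finrank ℂ ↥((L ⊔ Γ) ⊓ M) = finrank ℂ ↥(L ⊓ gammaPush Γ Γ' M) ∧
    finrank ℂ (W ⧸ ((L ⊔ Γ) ⊔ M)) =
      finrank ℂ (↥(Γ' ⊓ Γᗮ) ⧸
        Submodule.comap (Γ' ⊓ Γᗮ).subtype (L ⊔ gammaPush Γ Γ' M)) ∧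
    (finrank ℂ ↥((L ⊔ Γ) ⊓ M) : ℤ) - (finrank ℂ (W ⧸ ((L ⊔ Γ) ⊔ M)) : ℤ) =
      (finrank ℂ ↥(L ⊓ gammaPush Γ Γ' M) : ℤ) -
      (finrank ℂ (↥(Γ' ⊓ Γᗮ) ⧸
        Submodule.comap (Γ' ⊓ Γᗮ).subtype (L ⊔ gammaPush Γ Γ' M)) : ℤ) := by
  obtain ⟨hMΓcl, hMΓbot, hMΓ'top⟩ := hMT
  set β : Submodule ℂ W := Γ' ⊓ Γᗮ with hβdef
  set K : Submodule ℂ W := gammaPush Γ Γ' M with hKdef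
  have hβcl : IsClosed (β : Set W) := hΓ'.inter Γ.isClosed_orthogonal
  have hβle : β ≤ Γ' := inf_le_left
  have hΓβ : Γ ≤ βᗮ :=
    le_trans Γ.le_orthogonal_orthogonal (Submodule.orthogonal_le inf_le_right)
  have hLΓ' : L ≤ Γ' := le_trans hLβ hβle
  have hPmem : ∀ x : W, orthProj β x ∈ β := fun x => (orthProj_spec β hβcl x).1
  have hPb : ∀ b ∈ β, orthProj β b = b := fun b hb => orthProj_eq β hβcl hb (by simp)
  have hPg : ∀ g ∈ Γ, orthProj β g = 0 := fun g hg =>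
    orthProj_eq β hβcl (zero_mem β) (by simpa using hΓβ hg)
  have hsplit : ∀ x ∈ Γ', x - orthProj β x ∈ Γ := by
    intro x hx
    obtain ⟨hq1, hq2⟩ := orthProj_spec Γ hΓ x
    have h1 : x - orthProj Γ x ∈ β :=
      Submodule.mem_inf.mpr ⟨Γ'.sub_mem hx (hle hq1), hq2⟩
    have h2 : orthProj β x = x - orthProj Γ x :=
      orthProj_eq β hβcl h1 (by simpa [sub_sub_cancel] using hΓβ hq1)
    rw [h2]
    simpa [sub_sub_cancel] using hq1
  have hKmem : ∀ {m : W}, m ∈ M → m ∈ Γ' → orthProj β m ∈ K := by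
    intro m h1 h2
    exact Submodule.mem_map_of_mem (Submodule.mem_inf.mpr ⟨h1, h2⟩)
  have hKelim : ∀ {y : W}, y ∈ K → ∃ m, m ∈ M ∧ m ∈ Γ' ∧ orthProj β m = y := by
    intro y hy
    obtain ⟨m, hm, hmy⟩ := Submodule.mem_map.mp hy
    exact ⟨m, (Submodule.mem_inf.mp hm).1, (Submodule.mem_inf.mp hm).2, hmy⟩
  have hKeq : K = β ⊓ (M ⊔ Γ) := by
    apply le_antisymm
    · rintro y hy
      obtain ⟨m, hmM, hmΓ', rfl⟩ := hKelim hy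
      refine Submodule.mem_inf.mpr ⟨hPmem m, ?_⟩
      refine Submodule.mem_sup.mpr ⟨m, hmM, -(m - orthProj β m), neg_mem (hsplit m hmΓ'), by abel⟩
    · rintro b hb
      obtain ⟨hbβ, hbMΓ⟩ := Submodule.mem_inf.mp hb
      obtain ⟨m, hmM, g, hgΓ, hmg⟩ := Submodule.mem_sup.mp hbMΓ
      have hmΓ' : m ∈ Γ' := by
        have hm' : m = b - g := by rw [← hmg]; abel
        rw [hm']; exact Γ'.sub_mem (hβle hbβ) (hle hgΓ)
      have hPm : orthProj β m = b := by
        have hm' : m = b - g := by rw [← hmg]; abel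
        rw [hm', map_sub, hPb b hbβ, hPg g hgΓ, sub_zero]
      rw [← hPm]
      exact hKmem hmM hmΓ'
  have hLK_le : L ⊔ K ≤ β := sup_le hLβ (hKeq ▸ inf_le_left)
  have hKC : K ≤ M ⊔ Γ := hKeq ▸ inf_le_right
  have hKS : K ≤ (L ⊔ Γ) ⊔ M :=
    le_trans hKC (sup_le le_sup_right (le_sup_of_le_left le_sup_right))
  have hLKS : L ⊔ K ≤ (L ⊔ Γ) ⊔ M :=
    sup_le (le_sup_of_le_left le_sup_left) hKS
  have hΓ'le : Γ' ≤ Γ ⊔ β := fun x hx =>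
    Submodule.mem_sup.mpr ⟨x - orthProj β x, hsplit x hx, orthProj β x, hPmem x, by abel⟩
  have hLΓle : L ⊔ Γ ≤ Γ' := sup_le hLΓ' hle
  -- the intersection equivalence
  have hmapin : ∀ x ∈ (L ⊔ Γ) ⊓ M, orthProj β x ∈ L ⊓ K := by
    intro x hx
    obtain ⟨hx1, hx2⟩ := Submodule.mem_inf.mp hx
    obtain ⟨l, hl, g, hg, hsum⟩ := Submodule.mem_sup.mp hx1
    have hPx : orthProj β x = l := by
      rw [← hsum, map_add, hPb l (hLβ hl), hPg g hg, add_zero]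
    refine Submodule.mem_inf.mpr ⟨hPx ▸ hl, ?_⟩
    exact hKmem hx2 (hLΓle hx1)
  set f1 : ↥((L ⊔ Γ) ⊓ M) →ₗ[ℂ] ↥(L ⊓ K) :=
    LinearMap.restrict ((orthProj β : W →L[ℂ] W) : W →ₗ[ℂ] W) hmapin with hf1def
  have hf1app : ∀ x : ↥((L ⊔ Γ) ⊓ M), (f1 x : W) = orthProj β (x : W) := fun x => rfl
  have hinj : Function.Injective f1 := by
    rw [← LinearMap.ker_eq_bot, LinearMap.ker_eq_bot']
    intro x hx0
    have h0 : orthProj β (x : W) = 0 := by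
      have := congrArg (Subtype.val) hx0
      simpa [hf1app] using this
    obtain ⟨hx1, hx2⟩ := Submodule.mem_inf.mp x.2
    have hxΓ : (x : W) ∈ Γ := by
      have := hsplit (x : W) (hLΓle hx1)
      rwa [h0, sub_zero] at this
    have : (x : W) ∈ M ⊓ Γ := Submodule.mem_inf.mpr ⟨hx2, hxΓ⟩
    rw [hMΓbot] at this
    exact Subtype.ext (by simpa using this)
  have hsurj : Function.Surjective f1 := by
    intro y
    obtain ⟨hy1, hy2⟩ := Submodule.mem_inf.mp y.2
    obtain ⟨m, hmM, hmΓ', hPm⟩ := hKelim hy2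
    have hmmem : m ∈ (L ⊔ Γ) ⊓ M := by
      refine Submodule.mem_inf.mpr ⟨?_, hmM⟩
      refine Submodule.mem_sup.mpr ⟨(y : W), hy1, m - orthProj β m, hsplit m hmΓ', ?_⟩
      rw [← hPm]; abel
    exact ⟨⟨m, hmmem⟩, Subtype.ext (by simpa [hf1app] using hPm)⟩
  have e1 : ↥((L ⊔ Γ) ⊓ M) ≃ₗ[ℂ] ↥(L ⊓ K) := LinearEquiv.ofBijective f1 ⟨hinj, hsurj⟩
  -- the quotient equivalence
  have hβS : β ⊓ ((L ⊔ Γ) ⊔ M) = L ⊔ K := by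
    apply le_antisymm
    · rintro b hb
      obtain ⟨hbβ, hbS⟩ := Submodule.mem_inf.mp hb
      obtain ⟨lg, hlg, m, hmM, hsum⟩ := Submodule.mem_sup.mp hbS
      obtain ⟨l, hl, g, hg, hsum2⟩ := Submodule.mem_sup.mp hlg
      have hmΓ' : m ∈ Γ' := by
        have hm' : m = b - l - g := by rw [← hsum, ← hsum2]; abel
        rw [hm']
        exact Γ'.sub_mem (Γ'.sub_mem (hβle hbβ) (hLΓ' hl)) (hle hg)
      have hb' : b = l + orthProj β m := by
        have h2 : b = l + g + m := by rw [← hsum, ← hsum2]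
        calc b = orthProj β b := (hPb b hbβ).symm
          _ = orthProj β l + orthProj β g + orthProj β m := by
              rw [h2, map_add, map_add]
          _ = l + orthProj β m := by
              rw [hPb l (hLβ hl), hPg g hg, add_zero]
      rw [hb']
      exact Submodule.add_mem _ (Submodule.mem_sup_left hl)
        (Submodule.mem_sup_right (hKmem hmM hmΓ'))
    · exact le_inf hLK_le hLKS
  have htop : β ⊔ ((L ⊔ Γ) ⊔ M) = ⊤ := by
    rw [← top_le_iff, ← hMΓ'top]
    refine sup_le (le_sup_of_le_right le_sup_right) ?_
    refine le_trans hΓ'le (sup_le ?_ le_sup_left)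
    exact le_sup_of_le_right (le_sup_of_le_left le_sup_right)
  set f2 : ↥β →ₗ[ℂ] W ⧸ ((L ⊔ Γ) ⊔ M) :=
    (Submodule.mkQ ((L ⊔ Γ) ⊔ M)).comp β.subtype with hf2def
  have hker2 : LinearMap.ker f2 = Submodule.comap β.subtype (L ⊔ K) := by
    ext x
    simp only [hf2def, LinearMap.mem_ker, LinearMap.comp_apply, Submodule.mkQ_apply,
      Submodule.Quotient.mk_eq_zero, Submodule.mem_comap, Submodule.subtype_apply]
    constructor
    · intro hx
      have : (x : W) ∈ β ⊓ ((L ⊔ Γ) ⊔ M) := Submodule.mem_inf.mpr ⟨x.2, hx⟩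
      rwa [hβS] at this
    · intro hx
      exact hLKS hx
  have hsurj2 : Function.Surjective f2 := by
    intro w
    obtain ⟨x, rfl⟩ := Submodule.mkQ_surjective _ w
    have hx : x ∈ β ⊔ ((L ⊔ Γ) ⊔ M) := htop ▸ Submodule.mem_top
    obtain ⟨b, hb, s, hs, hsum⟩ := Submodule.mem_sup.mp hx
    refine ⟨⟨b, hb⟩, ?_⟩
    simp only [hf2def, LinearMap.comp_apply, Submodule.mkQ_apply, Submodule.subtype_apply]
    rw [Submodule.Quotient.eq]
    have : b - x = -s := by rw [← hsum]; abel
    rw [this]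
    exact neg_mem hs
  have e2 : (↥β ⧸ Submodule.comap β.subtype (L ⊔ K)) ≃ₗ[ℂ] W ⧸ ((L ⊔ Γ) ⊔ M) :=
    (Submodule.quotEquivOfEq _ _ hker2.symm).trans (f2.quotKerEquivOfSurjective hsurj2)
  -- closedness of the sum
  set C : Submodule ℂ W := M ⊔ Γ with hCdef
  haveI : CompleteSpace C := hMΓcl.completeSpace_coe
  have hCorth : IsClosed ((Cᗮ : Submodule ℂ W) : Set W) := C.isClosed_orthogonal
  have hQCzero : ∀ c ∈ C, orthProj Cᗮ c = 0 := fun c hc =>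
    orthProj_eq Cᗮ hCorth (zero_mem _) (by simpa using C.le_orthogonal_orthogonal hc)
  have hQker : ∀ x : W, orthProj Cᗮ x = 0 → x ∈ C := by
    intro x hx
    have h := (orthProj_spec Cᗮ hCorth x).2
    rwa [hx, sub_zero, Submodule.orthogonal_orthogonal] at h
  set QW : W →L[ℂ] ↥Cᗮ :=
    ContinuousLinearMap.codRestrict (orthProj Cᗮ) Cᗮ (fun x => (orthProj_spec Cᗮ hCorth x).1)
    with hQWdef
  set Qt : ↥β →L[ℂ] ↥Cᗮ := QW.comp β.subtypeL with hQtdef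
  have hQtapp : ∀ b : ↥β, (Qt b : W) = orthProj Cᗮ (b : W) := fun b => rfl
  have hCβtop : C ⊔ β = ⊤ := by
    rw [← top_le_iff, ← hMΓ'top]
    refine sup_le (le_sup_of_le_left le_sup_left) ?_
    exact le_trans hΓ'le (sup_le (le_sup_of_le_left le_sup_right) le_sup_right)
  have hQtsurj : Function.Surjective Qt := by
    intro y
    have hy : (y : W) ∈ C ⊔ β := hCβtop ▸ Submodule.mem_top
    obtain ⟨c, hc, b, hb, hsum⟩ := Submodule.mem_sup.mp hy
    refine ⟨⟨b, hb⟩, ?_⟩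
    apply Subtype.ext
    rw [hQtapp]
    show orthProj Cᗮ b = (y : W)
    have hby : b = (y : W) - c := by rw [← hsum]; abel
    have hyy : orthProj Cᗮ (y : W) = (y : W) := orthProj_eq Cᗮ hCorth y.2 (by simp)
    rw [hby, map_sub, hyy, hQCzero c hc, sub_zero]
  haveI : CompleteSpace ↥β := hβcl.completeSpace_coe
  haveI : CompleteSpace ↥Cᗮ := hCorth.completeSpace_coe
  have hopen : IsOpenMap Qt := Qt.isOpenMap hQtsurj
  set L' : Submodule ℂ ↥β := Submodule.comap β.subtype (L ⊔ K) with hL'def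
  have hL'cl : IsClosed (L' : Set ↥β) := by
    have : (L' : Set ↥β) = (Subtype.val : ↥β → W) ⁻¹' ((L ⊔ K : Submodule ℂ W) : Set W) := rfl
    rw [this]
    exact hLF.1.preimage continuous_subtype_val
  have hsat : Qt ⁻¹' (Qt '' (L' : Set ↥β)) ⊆ (L' : Set ↥β) := by
    rintro x ⟨b, hbL', hQeq⟩
    have hval : orthProj Cᗮ (b : W) = orthProj Cᗮ (x : W) := by
      have := congrArg Subtype.val hQeq
      simpa [hQtapp] using this
    have h1 : orthProj Cᗮ ((x : W) - (b : W)) = 0 := by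
      rw [map_sub, hval, sub_self]
    have h2 : (x : W) - (b : W) ∈ C := hQker _ h1
    have hbLK : (b : W) ∈ L ⊔ K := hbL'
    have h3 : (x : W) - (b : W) ∈ β := sub_mem x.2 (hLK_le hbLK)
    have h4 : (x : W) - (b : W) ∈ K := by
      rw [hKeq]; exact Submodule.mem_inf.mpr ⟨h3, hCdef ▸ h2⟩
    have h5 : (x : W) ∈ L ⊔ K := by
      have := Submodule.add_mem _ hbLK (Submodule.mem_sup_right h4)
      simpa using this
    exact h5
  have himg_cl : IsClosed (Qt '' (L' : Set ↥β)) := by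
    rw [← isOpen_compl_iff]
    have hcompl : (Qt '' (L' : Set ↥β))ᶜ = Qt '' ((L' : Set ↥β)ᶜ) := by
      ext q
      constructor
      · intro hq
        obtain ⟨x, rfl⟩ := hQtsurj q
        exact ⟨x, fun hx => hq ⟨x, hx, rfl⟩, rfl⟩
      · rintro ⟨x, hx, rfl⟩ hmem
        exact hx (hsat hmem)
    rw [hcompl]
    exact hopen _ hL'cl.isOpen_compl
  have hSclosed : IsClosed (((L ⊔ Γ) ⊔ M : Submodule ℂ W) : Set W) := by
    have hSeq : (((L ⊔ Γ) ⊔ M : Submodule ℂ W) : Set W) = QW ⁻¹' (Qt '' (L' : Set ↥β)) := by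
      ext x
      simp only [Set.mem_preimage, SetLike.mem_coe]
      constructor
      · intro hx
        obtain ⟨lg, hlg, m, hmM, hsum⟩ := Submodule.mem_sup.mp hx
        obtain ⟨l, hl, g, hg, hsum2⟩ := Submodule.mem_sup.mp hlg
        refine ⟨⟨l, hLβ hl⟩, Submodule.mem_sup_left hl, ?_⟩
        apply Subtype.ext
        rw [hQtapp]
        show orthProj Cᗮ l = (QW x : W)
        have hxl : x - l ∈ C := by
          have : x - l = m + g := by rw [← hsum, ← hsum2]; abel
          rw [this]
          exact Submodule.add_mem _ (Submodule.mem_sup_left hmM) (Submodule.mem_sup_right hg)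
        have : orthProj Cᗮ x - orthProj Cᗮ l = 0 := by
          rw [← map_sub]
          exact hQCzero _ hxl
        have hQWx : (QW x : W) = orthProj Cᗮ x := rfl
        rw [hQWx]
        exact (sub_eq_zero.mp this).symm
      · rintro ⟨b, hbL', hQeq⟩
        have hval : orthProj Cᗮ (b : W) = orthProj Cᗮ x := by
          have := congrArg Subtype.val hQeq
          exact (hQtapp b).symm.trans this
        have h1 : orthProj Cᗮ (x - (b : W)) = 0 := by
          rw [map_sub, hval, sub_self]
        have h2 : x - (b : W) ∈ C := hQker _ h1
        have hbS : (b : W) ∈ (L ⊔ Γ) ⊔ M := hLKS hbL'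
        have hCS : C ≤ (L ⊔ Γ) ⊔ M := by
          rw [hCdef]
          exact sup_le le_sup_right (le_sup_of_le_left le_sup_right)
        have := Submodule.add_mem _ hbS (hCS h2)
        simpa using this
    rw [hSeq]
    exact himg_cl.preimage QW.continuous
  -- assembly
  obtain ⟨hLKcl, hfin1, hfin2⟩ := hLF
  haveI : FiniteDimensional ℂ ↥(L ⊓ K) := hfin1
  haveI : FiniteDimensional ℂ (↥β ⧸ Submodule.comap β.subtype (L ⊔ K)) := hfin2
  haveI : FiniteDimensional ℂ ↥((L ⊔ Γ) ⊓ M) := e1.symm.finiteDimensional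
  haveI : FiniteDimensional ℂ (W ⧸ ((L ⊔ Γ) ⊔ M)) := e2.finiteDimensional
  have hr1 : finrank ℂ ↥((L ⊔ Γ) ⊓ M) = finrank ℂ ↥(L ⊓ K) := e1.finrank_eq
  have hr2 : finrank ℂ (W ⧸ ((L ⊔ Γ) ⊔ M)) =
      finrank ℂ (↥β ⧸ Submodule.comap β.subtype (L ⊔ K)) := e2.symm.finrank_eq.symm ▸ rfl
  refine ⟨⟨hSclosed, inferInstance, inferInstance⟩, hr1, ?_, ?_⟩
  · exact e2.symm.finrank_eq
  · rw [hr1, e2.symm.finrank_eq]
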